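/- Let e ∈ ℝ[S_r] be an idempotent and T : V^r → ℝ an r-multilinear map on a real vector space V. Then eT = T if and only if for every r-tuple b = (v_1,…,v_r) ∈ V^r the group ring element T_b lies in the left ideal ℝ[S_r]·e* generated by e*. -/

import Mathlib

/-- Action of a group ring element `a ∈ ℝ[S_r]` on an `r`-multilinear map:
`(aT)(v₁,…,v_r) = Σ_p a(p)·T(v_{p(1)},…,v_{p(r)})`. -/
noncomputable def gact {V : Type} [AddCommGroup V] [Module ℝ V] {r : ℕ}
    (a : MonoidAlgebra ℝ (Equiv.Perm (Fin r)))
    (T : MultilinearMap ℝ (fun _ : Fin r => V) ℝ) :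
    MultilinearMap ℝ (fun _ : Fin r => V) ℝ :=
  ∑ p : Equiv.Perm (Fin r), a.coeff p • T.domDomCongr p
/-- The star map `a* := Σ_p a(p)·p⁻¹` on the group ring `ℝ[S_r]`. -/
noncomputable def astar {r : ℕ} (a : MonoidAlgebra ℝ (Equiv.Perm (Fin r))) :
    MonoidAlgebra ℝ (Equiv.Perm (Fin r)) :=
  MonoidAlgebra.ofCoeff (Finsupp.equivFunOnFinite.symm (fun p => a.coeff p⁻¹))
/-- `T_b := Σ_p T(v_{p(1)},…,v_{p(r)})·p ∈ ℝ[S_r]` for `b = (v₁,…,v_r)`. -/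
noncomputable def tb {V : Type} [AddCommGroup V] [Module ℝ V] {r : ℕ}
    (T : MultilinearMap ℝ (fun _ : Fin r => V) ℝ) (b : Fin r → V) :
    MonoidAlgebra ℝ (Equiv.Perm (Fin r)) :=
  MonoidAlgebra.ofCoeff (Finsupp.equivFunOnFinite.symm (fun p : Equiv.Perm (Fin r) => T (fun i => b (p i))))

/- The identity behind the theorem is `T_b(eT) = T_b(T)·e*`: since `e*` is an idempotent as well,
`T_b ∈ ℝ[S_r]·e*` makes `T_b` fixed by right multiplication with `e*`, and `T` is recovered from
the coefficients of `T_b` at the identity permutation. -/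

section

variable {V : Type} [AddCommGroup V] [Module ℝ V] {r : ℕ}

@[simp]
lemma astar_apply (a : MonoidAlgebra ℝ (Equiv.Perm (Fin r))) (p : Equiv.Perm (Fin r)) :
    (astar a).coeff p = a.coeff p⁻¹ := rfl

@[simp]
lemma tb_apply (T : MultilinearMap ℝ (fun _ : Fin r => V) ℝ) (b : Fin r → V)
    (p : Equiv.Perm (Fin r)) : (tb T b).coeff p = T (fun i => b (p i)) := rfl

lemma gact_apply (a : MonoidAlgebra ℝ (Equiv.Perm (Fin r)))
    (T : MultilinearMap ℝ (fun _ : Fin r => V) ℝ) (v : Fin r → V) :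
    gact a T v = ∑ p : Equiv.Perm (Fin r), a.coeff p * T (fun i => v (p i)) := by
  simp [gact]

lemma coeff_mul_astar (f g : MonoidAlgebra ℝ (Equiv.Perm (Fin r))) (x : Equiv.Perm (Fin r)) :
    (f * astar g).coeff x = ∑ p : Equiv.Perm (Fin r), g.coeff p * f.coeff (x * p) := by
  rw [MonoidAlgebra.coeff_mul_apply_right, Finsupp.sum_fintype _ _ (by simp)]
  refine Fintype.sum_equiv (Equiv.inv _) _ _ fun p => ?_
  simp [mul_comm]

lemma astar_mul (f g : MonoidAlgebra ℝ (Equiv.Perm (Fin r))) :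
    astar (f * g) = astar g * astar f := by
  ext x
  rw [coeff_mul_astar, astar_apply, MonoidAlgebra.coeff_mul_apply_left,
    Finsupp.sum_fintype _ _ (by simp)]
  simp [mul_inv_rev]

lemma tb_gact (e : MonoidAlgebra ℝ (Equiv.Perm (Fin r)))
    (T : MultilinearMap ℝ (fun _ : Fin r => V) ℝ) (b : Fin r → V) :
    tb (gact e T) b = tb T b * astar e := by
  ext q
  rw [coeff_mul_astar, tb_apply, gact_apply]
  rfl

lemma eq_of_tb_eq {S T : MultilinearMap ℝ (fun _ : Fin r => V) ℝ}
    (h : ∀ b, tb S b = tb T b) : S = T := by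
  ext b
  simpa using congrArg (fun f => f.coeff 1) (h b)

end

theorem stmt_6 (V : Type) [AddCommGroup V] [Module ℝ V] {r : ℕ}
    (e : MonoidAlgebra ℝ (Equiv.Perm (Fin r))) (he : e * e = e)
    (T : MultilinearMap ℝ (fun _ : Fin r => V) ℝ) :
    gact e T = T ↔
      ∀ b : Fin r → V, ∃ a : MonoidAlgebra ℝ (Equiv.Perm (Fin r)),
        tb T b = a * astar e := by
  constructor
  · intro h b
    exact ⟨tb T b, by rw [← tb_gact, h]⟩
  · intro h
    refine eq_of_tb_eq fun b => ?_
    obtain ⟨a, ha⟩ := h b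
    rw [tb_gact, ha, mul_assoc, ← astar_mul, he]
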